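/- The filtration F_i W⁺_{1+∞} := Span_ℚ{z^m D^a : m ≥ 1, 0 ≤ a ≤ (i+2)/2} is an ascending filtration of the Lie algebra W⁺_{1+∞} compatible with the Lie bracket: [F_i, F_j] ⊆ F_{i+j}. -/

import Mathlib

noncomputable section

/-- Laurent polynomials `ℚ[z, z⁻¹]`, the faithful representation of the algebra
generated by `z`, `z⁻¹` and the Euler operator `D = z d/dz`. -/
abbrev LaurentPoly : Type := AddMonoidAlgebra ℚ ℤ

/-- Multiplication by `z`. -/
def Zop : LaurentPoly →ₗ[ℚ] LaurentPoly :=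
  LinearMap.mulLeft ℚ (AddMonoidAlgebra.single (1 : ℤ) (1 : ℚ))

/-- The Euler operator `D = z d/dz`, acting on `zⁿ` by `n • zⁿ`. -/
def Dop : LaurentPoly →ₗ[ℚ] LaurentPoly :=
  (Finsupp.lsum ℚ (fun n : ℤ => (n : ℚ) • AddMonoidAlgebra.lsingle (R := ℚ) n)).comp
    (AddMonoidAlgebra.coeffLinearEquiv ℚ).toLinearMap

/-- The filtration `F_i W⁺_{1+∞} = Span_ℚ{z^m D^a : m ≥ 1, 0 ≤ a ≤ (i+2)/2}`,
i.e. `2a ≤ i + 2`. -/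
def Wfil (i : ℤ) : Submodule ℚ (Module.End ℚ LaurentPoly) :=
  Submodule.span ℚ {w | ∃ m a : ℕ, 1 ≤ m ∧ 2 * (a : ℤ) ≤ i + 2 ∧ w = Zop ^ m * Dop ^ a}

/-!
With `D z = z (D + 1)` one gets `Dᵃ zⁿ = zⁿ (D + n)ᵃ`, so
`[zᵐ Dᵃ, zⁿ Dᵇ] = z^{m+n} ((D + n)ᵃ Dᵇ - (D + m)ᵇ Dᵃ)`. Expanding binomially, the two copies of
`D^{a+b}` cancel and every remaining term is `z^{m+n} Dᵏ` with `k ≤ a + b - 1`; the bound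
`2a ≤ i + 2`, `2b ≤ j + 2` then gives `2k ≤ (i + j) + 2`. Bilinearity of the bracket passes from
generators to spans.
-/

open Finset

theorem add_natCast_pow_eq {R : Type*} [Semiring R] (d : R) (c a : ℕ) :
    (d + c) ^ a = d ^ a + ∑ k ∈ range a, (a.choose k * c ^ (a - k)) • d ^ k := by
  rw [(Nat.cast_commute c d).symm.add_pow, sum_range_succ, Nat.choose_self, Nat.sub_self, add_comm]
  congr 1
  · simp
  · refine sum_congr rfl fun k _ => ?_
    rw [nsmul_eq_mul, mul_assoc, ← Nat.cast_pow, ← Nat.cast_mul, ← Nat.cast_comm, mul_comm (c ^ _)]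

section EulerRelation

variable {R : Type*} [Ring R] {z d : R}

theorem mul_pow_eq_pow_mul_add_natCast (h : d * z = z * (d + 1)) (n : ℕ) :
    d * z ^ n = z ^ n * (d + n) := by
  induction n with
  | zero => simp
  | succ n ih =>
    rw [pow_succ, ← mul_assoc, ih, mul_assoc, add_mul, h, (Nat.cast_commute n z).eq]
    push_cast
    noncomm_ring

theorem pow_mul_pow_eq_pow_mul_add_natCast_pow (h : d * z = z * (d + 1)) (a n : ℕ) :
    d ^ a * z ^ n = z ^ n * (d + n) ^ a := by
  induction a with
  | zero => simp
  | succ a ih =>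
    rw [pow_succ', mul_assoc, ih, ← mul_assoc, mul_pow_eq_pow_mul_add_natCast h, mul_assoc,
      ← pow_succ']

theorem pow_mul_pow_mul_pow_mul_pow (h : d * z = z * (d + 1)) (m a n b : ℕ) :
    z ^ m * d ^ a * (z ^ n * d ^ b) = z ^ (m + n) * (d + n) ^ a * d ^ b := by
  rw [mul_assoc, ← mul_assoc (d ^ a), pow_mul_pow_eq_pow_mul_add_natCast_pow h, pow_add]
  noncomm_ring

theorem commutator_pow_mul_pow (h : d * z = z * (d + 1)) (m a n b : ℕ) :
    z ^ m * d ^ a * (z ^ n * d ^ b) - z ^ n * d ^ b * (z ^ m * d ^ a) =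
      ∑ k ∈ range a, (a.choose k * n ^ (a - k)) • (z ^ (m + n) * d ^ (k + b)) -
        ∑ k ∈ range b, (b.choose k * m ^ (b - k)) • (z ^ (m + n) * d ^ (k + a)) := by
  rw [pow_mul_pow_mul_pow_mul_pow h, pow_mul_pow_mul_pow_mul_pow h, add_comm n m,
    add_natCast_pow_eq, add_natCast_pow_eq]
  simp only [mul_add, add_mul, mul_sum, sum_mul, mul_smul_comm, smul_mul_assoc, mul_assoc,
    ← pow_add, add_comm b a]
  abel

end EulerRelation

section Operators

open AddMonoidAlgebra

theorem Zop_single (n : ℤ) (r : ℚ) : Zop (single n r) = single (1 + n) r := by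
  rw [Zop, LinearMap.mulLeft_apply, single_mul_single, one_mul]

theorem Dop_single (n : ℤ) (r : ℚ) : Dop (single n r) = (n : ℚ) • single n r := by
  change Finsupp.lsum ℚ _ (Finsupp.single n r) = _
  erw [Finsupp.lsum_single]
  rfl

theorem Dop_mul_Zop : (Dop * Zop : Module.End ℚ LaurentPoly) = Zop * (Dop + 1) := by
  refine lhom_ext' fun n => LinearMap.ext fun r => ?_
  change Dop (Zop (single n r)) = Zop (Dop (single n r) + single n r)
  rw [Zop_single, Dop_single, Dop_single, map_add, map_smul, Zop_single]
  push_cast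
  module

end Operators

theorem Wfil_mono : Monotone Wfil := fun _ _ hij =>
  Submodule.span_mono fun _ ⟨m, a, hm, ha, hw⟩ => ⟨m, a, hm, by omega, hw⟩

theorem Zop_pow_mul_Dop_pow_mem_Wfil {i : ℤ} {m k : ℕ} (hm : 1 ≤ m) (hk : 2 * (k : ℤ) ≤ i + 2) :
    Zop ^ m * Dop ^ k ∈ Wfil i :=
  Submodule.subset_span ⟨m, k, hm, hk, rfl⟩

theorem lie_Zop_pow_mul_Dop_pow_mem_Wfil {i j : ℤ} {m a n b : ℕ} (hm : 1 ≤ m)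
    (ha : 2 * (a : ℤ) ≤ i + 2) (hb : 2 * (b : ℤ) ≤ j + 2) :
    ⁅Zop ^ m * Dop ^ a, Zop ^ n * Dop ^ b⁆ ∈ Wfil (i + j) := by
  rw [Ring.lie_def, commutator_pow_mul_pow Dop_mul_Zop]
  refine Submodule.sub_mem _ (Submodule.sum_mem _ fun k hk => ?_)
    (Submodule.sum_mem _ fun k hk => ?_) <;>
  · rw [mem_range] at hk
    exact nsmul_mem
      (Zop_pow_mul_Dop_pow_mem_Wfil (by omega) (by push_cast; omega)) _

theorem lie_mem_Wfil {i j : ℤ} {x y : Module.End ℚ LaurentPoly} (hx : x ∈ Wfil i)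
    (hy : y ∈ Wfil j) : ⁅x, y⁆ ∈ Wfil (i + j) := by
  let bracket : Module.End ℚ LaurentPoly →ₗ[ℚ] Module.End ℚ LaurentPoly →ₗ[ℚ] _ :=
    LinearMap.mk₂ ℚ (fun x y => ⁅x, y⁆) (fun _ _ _ => by simp only [Ring.lie_def]; noncomm_ring)
      (fun _ _ _ => by simp only [Ring.lie_def, smul_mul_assoc, mul_smul_comm, smul_sub])
      (fun _ _ _ => by simp only [Ring.lie_def]; noncomm_ring)
      (fun _ _ _ => by simp only [Ring.lie_def, smul_mul_assoc, mul_smul_comm, smul_sub])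
  have hspan : Submodule.map₂ bracket (Wfil i) (Wfil j) ≤ Wfil (i + j) := by
    rw [Wfil, Wfil, Submodule.map₂_span_span, Submodule.span_le]
    rintro _ ⟨_, ⟨m, a, hm, ha, rfl⟩, _, ⟨n, b, -, hb, rfl⟩, rfl⟩
    exact lie_Zop_pow_mul_Dop_pow_mem_Wfil hm ha hb
  exact hspan (Submodule.apply_mem_map₂ bracket hx hy)

/-- The filtration `F_i W⁺_{1+∞} := Span_ℚ{z^m D^a : m ≥ 1, 0 ≤ a ≤ (i+2)/2}` is an
ascending filtration of the Lie algebra `W⁺_{1+∞}` compatible with the Lie bracket: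
`[F_i, F_j] ⊆ F_{i+j}`. -/
theorem Wfil_ascending_and_bracket_compatible :
    (∀ i j : ℤ, i ≤ j → Wfil i ≤ Wfil j) ∧
    (∀ i j : ℤ, ∀ x ∈ Wfil i, ∀ y ∈ Wfil j, ⁅x, y⁆ ∈ Wfil (i + j)) :=
  ⟨fun _ _ hij => Wfil_mono hij, fun _ _ _ hx _ hy => lie_mem_Wfil hx hy⟩
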